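/- Let R be a strongly G-graded unital ring. Then R is G-controlled if and only if every R_g is a simple R_e-bimodule and C_R(R_e) = Z(R_e). -/

import Mathlib

open DirectSum Pointwise

namespace Controlled

variable {G R : Type*} [AddGroup G] [DecidableEq G] [Ring R]

/-- `P` is an `R_e`-sub-bimodule of `R` (w.r.t. the grading `𝒜`, written additively,
so `R_e = 𝒜 0`). -/
def IsSubBimodule (𝒜 : G → AddSubgroup R) (P : AddSubgroup R) : Prop :=
  ∀ a ∈ 𝒜 0, ∀ x ∈ P, a * x ∈ P ∧ x * a ∈ P

/-- The `R_e`-bimodule `R_H = ⊕_{h ∈ H} R_h` (internally, the subgroup generated by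
the `R_h`, `h ∈ H`; the sum is automatically direct). `R_∅ = ⊥ = {0}`. -/
def RH (𝒜 : G → AddSubgroup R) (H : Set G) : AddSubgroup R := ⨆ h ∈ H, 𝒜 h

/-- An `R_e`-bimodule isomorphism between additive subgroups `P` and `Q` of `R`:
an additive equivalence compatible with left and right multiplication by `R_e = 𝒜 0`. -/
structure BimodIso (𝒜 : G → AddSubgroup R) (P Q : AddSubgroup R) where
  toEquiv : P ≃+ Q
  map_left : ∀ (a x : R), a ∈ 𝒜 0 → ∀ (hx : x ∈ P) (hax : a * x ∈ P),
    (toEquiv ⟨a * x, hax⟩ : R) = a * (toEquiv ⟨x, hx⟩ : R)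
  map_right : ∀ (a x : R), a ∈ 𝒜 0 → ∀ (hx : x ∈ P) (hxa : x * a ∈ P),
    (toEquiv ⟨x * a, hxa⟩ : R) = (toEquiv ⟨x, hx⟩ : R) * a

/-- `R` is `G`-controlled: `H ↦ R_H` is a bijection from subsets of `G` onto the
`R_e`-sub-bimodules of `R`, and `R_S ≅ R_T` (as `R_e`-bimodules) iff `S = T`. -/
def IsControlled (𝒜 : G → AddSubgroup R) : Prop :=
  (∀ H : Set G, IsSubBimodule 𝒜 (RH 𝒜 H)) ∧
  Function.Injective (RH 𝒜) ∧
  (∀ P : AddSubgroup R, IsSubBimodule 𝒜 P → ∃ H : Set G, RH 𝒜 H = P) ∧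
  (∀ S T : Set G, Nonempty (BimodIso 𝒜 (RH 𝒜 S) (RH 𝒜 T)) ↔ S = T)

/-- `P` is a (nonzero) simple `R_e`-bimodule contained in `R`. -/
def IsSimpleBimod (𝒜 : G → AddSubgroup R) (P : AddSubgroup R) : Prop :=
  P ≠ ⊥ ∧ ∀ Q : AddSubgroup R, Q ≤ P → IsSubBimodule 𝒜 Q → Q = ⊥ ∨ Q = P

/-- The product `AB` of two additive subgroups of `R`: all finite sums of products. -/
def mulSub (A B : AddSubgroup R) : AddSubgroup R :=
  AddSubgroup.closure ((A : Set R) * (B : Set R))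

/-- `R` is strongly graded: `R_g R_h = R_{g+h}` for all `g, h`. -/
def IsStronglyGraded (𝒜 : G → AddSubgroup R) : Prop :=
  ∀ g h : G, mulSub (𝒜 g) (𝒜 h) = 𝒜 (g + h)

/-- `C_R(R_e) = Z(R_e)` as subsets of `R`. -/
def CentralizerEqCenter (𝒜 : G → AddSubgroup R) : Prop :=
  {x : R | ∀ r ∈ 𝒜 0, x * r = r * x} = {x : R | x ∈ 𝒜 0 ∧ ∀ r ∈ 𝒜 0, x * r = r * x}

/-- A two-sided ideal `I` is graded if each homogeneous component of each of its
elements again lies in `I` (equivalently, `I = ⊕_g (I ∩ R_g)`). -/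
def IsGradedIdeal (𝒜 : G → AddSubgroup R) [GradedRing 𝒜] (I : TwoSidedIdeal R) : Prop :=
  ∀ x ∈ I, ∀ g : G, (DirectSum.decompose 𝒜 x g : R) ∈ I

/-- `R` is graded simple: the only graded two-sided ideals are `{0}` and `R`. -/
def IsGradedSimple (𝒜 : G → AddSubgroup R) [GradedRing 𝒜] : Prop :=
  ∀ I : TwoSidedIdeal R, IsGradedIdeal 𝒜 I → I = ⊥ ∨ I = ⊤

end Controlled

variable {G R : Type*} [AddGroup G] [DecidableEq G] [Ring R]

/-!
Strong grading gives `1 = ∑ aᵢ bᵢ` with `aᵢ ∈ R_{-g}`, `bᵢ ∈ R_g`. For an `R_e`-bimodule map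
`f : R_g → R_h` the element `u = ∑ aᵢ f(bᵢ) ∈ R_{-g+h}` satisfies `u (a y) = a f(y)` for
`a ∈ R_{-g}`, `y ∈ R_g`; hence `u` centralizes `R_e`. If `C_R(R_e) = Z(R_e)` and `g ≠ h`, then
`u ∈ R_e ∩ R_{-g+h} = 0`, so `f = 0`. Thus the simple bimodules `R_g` are pairwise
non-isomorphic, and, as for a semisimple module whose simple summands are pairwise
non-isomorphic, every sub-bimodule of `R = ⊕ R_g` is some `R_H` and `R_S ≅ R_T` forces `S = T`.

Conversely, if `R` is `G`-controlled, a sub-bimodule of `R_g` is an `R_H` with `H ⊆ {g}`, and a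
nonzero `y ∈ R_k` centralizing `R_e` makes `r ↦ y r` an isomorphism `R_e ≅ R_k`, so `k = e`.
-/

namespace Controlled

open GradedRing

section RH

variable {ι : Type*} {𝒜 : ι → AddSubgroup R}

lemma RH_empty : RH 𝒜 ∅ = ⊥ := by simp [RH]

lemma RH_singleton (i : ι) : RH 𝒜 {i} = 𝒜 i := by simp [RH]

lemma le_RH {H : Set ι} {i : ι} (hi : i ∈ H) : 𝒜 i ≤ RH 𝒜 H :=
  le_iSup₂ (f := fun i _ ↦ 𝒜 i) i hi

lemma RH_le {H : Set ι} {P : AddSubgroup R} (h : ∀ i ∈ H, 𝒜 i ≤ P) : RH 𝒜 H ≤ P :=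
  iSup₂_le h

end RH

lemma mulSub_le {A B P : AddSubgroup R} (h : ∀ a ∈ A, ∀ b ∈ B, a * b ∈ P) : mulSub A B ≤ P :=
  (AddSubgroup.closure_le _).mpr (Set.mul_subset_iff.mpr h)

section Grading

variable {ι : Type*} [DecidableEq ι] [AddMonoid ι] {𝒜 : ι → AddSubgroup R} [GradedRing 𝒜]

lemma proj_mem (i : ι) (x : R) : proj 𝒜 i x ∈ 𝒜 i := (decompose 𝒜 x i).2

lemma proj_of_mem {i : ι} {x : R} (hx : x ∈ 𝒜 i) : proj 𝒜 i x = x :=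
  decompose_of_mem_same 𝒜 hx

lemma proj_of_mem_of_ne {i j : ι} {x : R} (hx : x ∈ 𝒜 i) (h : i ≠ j) : proj 𝒜 j x = 0 :=
  decompose_of_mem_ne 𝒜 hx h

lemma eq_zero_of_mem_of_mem {i j : ι} {x : R} (hi : x ∈ 𝒜 i) (hj : x ∈ 𝒜 j) (h : i ≠ j) :
    x = 0 := by
  rw [← proj_of_mem hj, proj_of_mem_of_ne hi h]

lemma proj_mul_left_of_mem_zero {a : R} (ha : a ∈ 𝒜 0) (x : R) (i : ι) :
    proj 𝒜 i (a * x) = a * proj 𝒜 i x :=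
  coe_decompose_mul_of_left_mem_zero 𝒜 ha

lemma proj_mul_right_of_mem_zero {a : R} (ha : a ∈ 𝒜 0) (x : R) (i : ι) :
    proj 𝒜 i (x * a) = proj 𝒜 i x * a :=
  coe_decompose_mul_of_right_mem_zero 𝒜 ha

lemma exists_proj_ne_zero {x : R} (hx : x ≠ 0) : ∃ i, proj 𝒜 i x ≠ 0 := by
  by_contra! h
  exact hx ((decompose 𝒜).injective (by ext i; simpa using h i))

lemma mul_mem_left_of_mem_zero {a x : R} {i : ι} (ha : a ∈ 𝒜 0) (hx : x ∈ 𝒜 i) : a * x ∈ 𝒜 i := by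
  simpa using SetLike.mul_mem_graded ha hx

lemma mul_mem_right_of_mem_zero {a x : R} {i : ι} (ha : a ∈ 𝒜 0) (hx : x ∈ 𝒜 i) : x * a ∈ 𝒜 i := by
  simpa using SetLike.mul_mem_graded hx ha

lemma mem_RH_iff {H : Set ι} {x : R} : x ∈ RH 𝒜 H ↔ ∀ i ∉ H, proj 𝒜 i x = 0 := by
  classical
  constructor
  · intro hx
    have : RH 𝒜 H ≤ ⨅ i ∉ H, (proj 𝒜 i).ker :=
      RH_le fun j hj ↦ le_iInf₂ fun i hi y hy ↦ proj_of_mem_of_ne hy (ne_of_mem_of_not_mem hj hi)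
    simpa [AddSubgroup.mem_iInf] using this hx
  · intro hx
    rw [← sum_support_decompose 𝒜 x]
    refine sum_mem fun i _ ↦ ?_
    by_cases hi : i ∈ H
    · exact le_RH hi (proj_mem i x)
    · simp [← proj_apply, hx i hi]

lemma mem_of_le_RH {H : Set ι} {i : ι} (hne : 𝒜 i ≠ ⊥) (hle : 𝒜 i ≤ RH 𝒜 H) : i ∈ H := by
  obtain ⟨y, hy, hy0⟩ := (AddSubgroup.bot_or_exists_ne_zero (𝒜 i)).resolve_left hne
  by_contra hi
  exact hy0 (by rw [← proj_of_mem hy]; exact mem_RH_iff.mp (hle hy) i hi)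

lemma RH_injective (hne : ∀ i, 𝒜 i ≠ ⊥) : Function.Injective (RH 𝒜) := by
  have hsubset {S T : Set ι} (h : RH 𝒜 S = RH 𝒜 T) : S ⊆ T :=
    fun i hi ↦ mem_of_le_RH (hne i) (h ▸ le_RH hi)
  exact fun S T h ↦ (hsubset h).antisymm (hsubset h.symm)

end Grading

section Bimodule

variable {ι : Type*} [AddGroup ι] {𝒜 : ι → AddSubgroup R}

lemma centralizerEqCenter_iff :
    CentralizerEqCenter 𝒜 ↔ ∀ x : R, (∀ r ∈ 𝒜 0, x * r = r * x) → x ∈ 𝒜 0 := by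
  simp only [CentralizerEqCenter, Set.ext_iff]
  exact ⟨fun h x hx ↦ ((h x).mp hx).1, fun h x ↦ ⟨fun hx ↦ ⟨h x hx, hx⟩, And.right⟩⟩

lemma IsSubBimodule.inf {P Q : AddSubgroup R} (hP : IsSubBimodule 𝒜 P)
    (hQ : IsSubBimodule 𝒜 Q) : IsSubBimodule 𝒜 (P ⊓ Q) :=
  fun a ha x hx ↦
    ⟨⟨(hP a ha x hx.1).1, (hQ a ha x hx.2).1⟩, ⟨(hP a ha x hx.1).2, (hQ a ha x hx.2).2⟩⟩

lemma IsControlled.ne_bot (hc : IsControlled 𝒜) (i : ι) : 𝒜 i ≠ ⊥ :=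
  fun h ↦ Set.singleton_ne_empty i (hc.2.1 (by rw [RH_singleton, RH_empty, h]))

def BimodIso.symm {P Q : AddSubgroup R} (hP : IsSubBimodule 𝒜 P) (Φ : BimodIso 𝒜 P Q) :
    BimodIso 𝒜 Q P where
  toEquiv := Φ.toEquiv.symm
  map_left a x ha hx hax := by
    set w := Φ.toEquiv.symm ⟨x, hx⟩
    have h := Φ.map_left a w ha w.2 (hP a ha w w.2).1
    rw [Subtype.coe_eta, AddEquiv.apply_symm_apply] at h
    rw [Φ.toEquiv.symm_apply_eq.mpr (Subtype.ext h.symm)]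
  map_right a x ha hx hxa := by
    set w := Φ.toEquiv.symm ⟨x, hx⟩
    have h := Φ.map_right a w ha w.2 (hP a ha w w.2).2
    rw [Subtype.coe_eta, AddEquiv.apply_symm_apply] at h
    rw [Φ.toEquiv.symm_apply_eq.mpr (Subtype.ext h.symm)]

lemma nonempty_bimodIso_of_mulLeft {y : R} (hy : ∀ r ∈ 𝒜 0, y * r = r * y)
    {P Q : AddSubgroup R} (hPQ : P.map (AddMonoidHom.mulLeft y) = Q)
    (hker : P ⊓ (AddMonoidHom.mulLeft y).ker = ⊥) : Nonempty (BimodIso 𝒜 P Q) := by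
  subst hPQ
  have hinj : Function.Injective ((AddMonoidHom.mulLeft y).addSubgroupMap P) := by
    rw [injective_iff_map_eq_zero]
    intro x hx
    have : (x : R) ∈ P ⊓ (AddMonoidHom.mulLeft y).ker := ⟨x.2, congrArg Subtype.val hx⟩
    simpa [hker] using this
  refine ⟨⟨AddEquiv.ofBijective _ ⟨hinj, AddMonoidHom.addSubgroupMap_surjective _ P⟩, ?_, ?_⟩⟩
  · intro a x ha _ _
    show y * (a * x) = a * (y * x)
    rw [← mul_assoc, hy a ha, mul_assoc]
  · intro a x _ _ _
    exact (mul_assoc y x a).symm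

end Bimodule

section GradedBimodule

variable {ι : Type*} [AddGroup ι] [DecidableEq ι] {𝒜 : ι → AddSubgroup R} [GradedRing 𝒜]

lemma isSubBimodule_RH (H : Set ι) : IsSubBimodule 𝒜 (RH 𝒜 H) := by
  intro a ha x hx
  simp only [mem_RH_iff] at hx ⊢
  exact ⟨fun i hi ↦ by rw [proj_mul_left_of_mem_zero ha, hx i hi, mul_zero],
    fun i hi ↦ by rw [proj_mul_right_of_mem_zero ha, hx i hi, zero_mul]⟩

lemma isSubBimodule_map_proj {M : AddSubgroup R} (hM : IsSubBimodule 𝒜 M) (i : ι) :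
    IsSubBimodule 𝒜 (M.map (proj 𝒜 i)) := by
  rintro a ha _ ⟨m, hm, rfl⟩
  exact ⟨⟨a * m, (hM a ha m hm).1, proj_mul_left_of_mem_zero ha m i⟩,
    ⟨m * a, (hM a ha m hm).2, proj_mul_right_of_mem_zero ha m i⟩⟩

lemma isSubBimodule_grade (i : ι) : IsSubBimodule 𝒜 (𝒜 i) :=
  fun _ ha _ hx ↦ ⟨mul_mem_left_of_mem_zero ha hx, mul_mem_right_of_mem_zero ha hx⟩

lemma IsSimpleBimod.inf_eq_bot {i : ι} (hsimp : IsSimpleBimod 𝒜 (𝒜 i)) {P : AddSubgroup R}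
    (hP : IsSubBimodule 𝒜 P) (hi : ¬𝒜 i ≤ P) : P ⊓ 𝒜 i = ⊥ :=
  (hsimp.2 _ inf_le_right (hP.inf (isSubBimodule_grade i))).resolve_right
    fun h ↦ hi (h ▸ inf_le_left)

lemma IsControlled.isSimpleBimod (hc : IsControlled 𝒜) (i : ι) : IsSimpleBimod 𝒜 (𝒜 i) := by
  refine ⟨hc.ne_bot i, fun Q hQi hQ ↦ ?_⟩
  obtain ⟨H, rfl⟩ := hc.2.2.1 Q hQ
  have : H ⊆ {i} := fun j hj ↦
    mem_of_le_RH (hc.ne_bot j) ((le_RH hj).trans (hQi.trans (RH_singleton i).ge))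
  rcases Set.subset_singleton_iff_eq.mp this with rfl | rfl
  · exact Or.inl RH_empty
  · exact Or.inr (RH_singleton i)

lemma IsControlled.eq_zero_of_commute (hc : IsControlled 𝒜) {i : ι} (hi : i ≠ 0) {y : R}
    (hy : y ∈ 𝒜 i) (hcomm : ∀ r ∈ 𝒜 0, y * r = r * y) : y = 0 := by
  by_contra hy0
  set μ := AddMonoidHom.mulLeft y
  have hsurj : (𝒜 0).map μ = 𝒜 i := by
    refine ((hc.isSimpleBimod i).2 _ ?_ ?_).resolve_left ?_
    · rintro _ ⟨r, hr, rfl⟩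
      exact mul_mem_right_of_mem_zero hr hy
    · rintro a ha _ ⟨r, hr, rfl⟩
      exact ⟨⟨a * r, mul_mem_left_of_mem_zero ha hr, by simp [μ, ← mul_assoc, hcomm a ha]⟩,
        ⟨r * a, mul_mem_left_of_mem_zero hr ha, by simp [μ, mul_assoc]⟩⟩
    · intro h
      exact hy0 (by simpa [μ, h] using AddSubgroup.mem_map_of_mem μ (SetLike.one_mem_graded 𝒜))
  have hker : 𝒜 0 ⊓ μ.ker = ⊥ := by
    refine ((hc.isSimpleBimod 0).2 _ inf_le_left ?_).resolve_right ?_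
    · intro a ha r hr
      simp only [AddSubgroup.mem_inf, AddMonoidHom.mem_ker, μ, AddMonoidHom.coe_mulLeft] at hr ⊢
      refine ⟨⟨mul_mem_left_of_mem_zero ha hr.1, ?_⟩, ⟨mul_mem_left_of_mem_zero hr.1 ha, ?_⟩⟩
      · rw [← mul_assoc, hcomm a ha, mul_assoc, hr.2, mul_zero]
      · rw [← mul_assoc, hr.2, zero_mul]
    · intro h
      have : (1 : R) ∈ 𝒜 0 ⊓ μ.ker := by rw [h]; exact SetLike.one_mem_graded 𝒜
      exact hy0 (by simpa [μ] using this.2)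
  have hiso := nonempty_bimodIso_of_mulLeft hcomm hsurj hker
  rw [← RH_singleton (𝒜 := 𝒜) 0, ← RH_singleton (𝒜 := 𝒜) i, hc.2.2.2] at hiso
  exact hi (Set.singleton_eq_singleton_iff.mp hiso).symm

lemma IsControlled.centralizerEqCenter (hc : IsControlled 𝒜) : CentralizerEqCenter 𝒜 := by
  refine centralizerEqCenter_iff.mpr fun x hx ↦ ?_
  rw [← RH_singleton (𝒜 := 𝒜) 0, mem_RH_iff]
  intro i hi
  refine hc.eq_zero_of_commute hi (proj_mem i x) fun r hr ↦ ?_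
  rw [← proj_mul_right_of_mem_zero hr, ← proj_mul_left_of_mem_zero hr, hx r hr]

end GradedBimodule

section StronglyGraded

variable {ι : Type*} [AddGroup ι] [DecidableEq ι] {𝒜 : ι → AddSubgroup R} [GradedRing 𝒜]

lemma one_mem_mulSub (hstrong : IsStronglyGraded 𝒜) {g h : ι} (hgh : g + h = 0) :
    (1 : R) ∈ mulSub (𝒜 g) (𝒜 h) := by
  rw [hstrong, hgh]
  exact SetLike.one_mem_graded 𝒜

lemma bimoduleMap_eq_zero (hstrong : IsStronglyGraded 𝒜)
    (hcent : CentralizerEqCenter 𝒜) {g h : ι} (hgh : g ≠ h)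
    (f : R → R) (hmem : ∀ y ∈ 𝒜 g, f y ∈ 𝒜 h)
    (hleft : ∀ a ∈ 𝒜 0, ∀ y ∈ 𝒜 g, f (a * y) = a * f y)
    (hright : ∀ a ∈ 𝒜 0, ∀ y ∈ 𝒜 g, f (y * a) = f y * a) {y : R} (hy : y ∈ 𝒜 g) :
    f y = 0 := by
  have mem_zero_left {a b : R} (ha : a ∈ 𝒜 (-g)) (hb : b ∈ 𝒜 g) : a * b ∈ 𝒜 0 := by
    simpa using SetLike.mul_mem_graded ha hb
  have mem_zero_right {a b : R} (hb : b ∈ 𝒜 g) (ha : a ∈ 𝒜 (-g)) : b * a ∈ 𝒜 0 := by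
    simpa using SetLike.mul_mem_graded hb ha
  obtain ⟨u, hu, hua⟩ : ∃ u ∈ 𝒜 (-g + h), ∀ a ∈ 𝒜 (-g), ∀ y ∈ 𝒜 g, u * (a * y) = a * f y := by
    suffices ∀ x ∈ mulSub (𝒜 (-g)) (𝒜 g), ∃ u ∈ 𝒜 (-g + h),
        ∀ a ∈ 𝒜 (-g), ∀ y ∈ 𝒜 g, u * (a * y) = x * (a * f y) by
      simpa using this 1 (one_mem_mulSub hstrong (neg_add_cancel g))
    intro x hx
    induction hx using AddSubgroup.closure_induction with
    | mem x hx =>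
      obtain ⟨a', ha', b', hb', rfl⟩ := hx
      refine ⟨a' * f b', SetLike.mul_mem_graded ha' (hmem b' hb'), fun a ha y hy ↦ ?_⟩
      rw [mul_assoc, ← hright _ (mem_zero_left ha hy) _ hb', ← mul_assoc b',
        hleft _ (mem_zero_right hb' ha) _ hy]
      simp only [mul_assoc]
    | zero => exact ⟨0, zero_mem _, by simp⟩
    | add x x' _ _ hx hx' =>
      obtain ⟨u, hu, hux⟩ := hx
      obtain ⟨u', hu', hux'⟩ := hx'
      refine ⟨u + u', add_mem hu hu', fun a ha y hy ↦ ?_⟩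
      rw [add_mul, add_mul, hux a ha y hy, hux' a ha y hy]
    | neg x _ hx =>
      obtain ⟨u, hu, hux⟩ := hx
      exact ⟨-u, neg_mem hu, fun a ha y hy ↦ by simp [hux a ha y hy]⟩
  have hcomm : ∀ e ∈ 𝒜 0, u * e = e * u := by
    intro e he
    have : mulSub (𝒜 (-g)) (𝒜 g) ≤ (AddMonoidHom.mulLeft (u * e - e * u)).ker :=
      mulSub_le fun a ha b hb ↦ by
        have hea : e * a ∈ 𝒜 (-g) := mul_mem_left_of_mem_zero he ha
        rw [AddMonoidHom.mem_ker, AddMonoidHom.coe_mulLeft, sub_mul, mul_assoc, mul_assoc,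
          hua a ha b hb, ← mul_assoc e a b, hua _ hea b hb, mul_assoc, sub_self]
    simpa [sub_eq_zero] using this (one_mem_mulSub hstrong (neg_add_cancel g))
  have hu0 : u = 0 := eq_zero_of_mem_of_mem hu (centralizerEqCenter_iff.mp hcent u hcomm)
    (by simpa [neg_add_eq_zero] using hgh)
  have : mulSub (𝒜 g) (𝒜 (-g)) ≤ (AddMonoidHom.mulRight (f y)).ker :=
    mulSub_le fun b hb a ha ↦ by simp [mul_assoc, ← hua a ha y hy, hu0]
  simpa using this (one_mem_mulSub hstrong (add_neg_cancel g))

lemma proj_eq_zero_of_proj_injOn (hstrong : IsStronglyGraded 𝒜) (hcent : CentralizerEqCenter 𝒜)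
    {g h : ι} (hgh : g ≠ h) (hsimp : IsSimpleBimod 𝒜 (𝒜 g)) {M : AddSubgroup R}
    (hM : IsSubBimodule 𝒜 M) (hinj : Set.InjOn (proj 𝒜 g) M) {m : R} (hm : m ∈ M) :
    proj 𝒜 h m = 0 := by
  rcases hsimp.2 _ (AddSubgroup.map_le_iff_le_comap.mpr fun x _ ↦ proj_mem g x)
    (isSubBimodule_map_proj hM g) with hbot | hsurj
  · have : proj 𝒜 g m = proj 𝒜 g 0 := by
      simpa [hbot] using AddSubgroup.mem_map_of_mem (proj 𝒜 g) hm
    rw [hinj hm (zero_mem M) this, map_zero]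
  set f : R → R := fun y ↦ proj 𝒜 h (Function.invFunOn (proj 𝒜 g) M y)
  have hf {m : R} (hm : m ∈ M) : f (proj 𝒜 g m) = proj 𝒜 h m := by
    simp only [f, hinj.leftInvOn_invFunOn hm]
  have hpre {y : R} (hy : y ∈ 𝒜 g) : ∃ m ∈ M, proj 𝒜 g m = y := by
    simpa [← hsurj] using hy
  rw [← hf hm]
  refine bimoduleMap_eq_zero hstrong hcent hgh f (fun y _ ↦ proj_mem h _) ?_ ?_ (proj_mem g m)
  · rintro a ha _ hy
    obtain ⟨m, hm, rfl⟩ := hpre hy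
    rw [← proj_mul_left_of_mem_zero ha, hf (hM a ha m hm).1, hf hm, proj_mul_left_of_mem_zero ha]
  · rintro a ha _ hy
    obtain ⟨m, hm, rfl⟩ := hpre hy
    rw [← proj_mul_right_of_mem_zero ha, hf (hM a ha m hm).2, hf hm, proj_mul_right_of_mem_zero ha]

lemma inf_RH_eq_bot (hstrong : IsStronglyGraded 𝒜) (hcent : CentralizerEqCenter 𝒜)
    (hsimp : ∀ i, IsSimpleBimod 𝒜 (𝒜 i)) {P : AddSubgroup R} (hP : IsSubBimodule 𝒜 P)
    (F : Finset ι) (hF : ∀ i ∈ F, P ⊓ 𝒜 i = ⊥) : P ⊓ RH 𝒜 F = ⊥ := by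
  induction F using Finset.induction_on with
  | empty => simp [RH_empty]
  | insert g F hgF ih =>
    set M := P ⊓ RH 𝒜 ↑(insert g F)
    have hM : IsSubBimodule 𝒜 M := hP.inf (isSubBimodule_RH _)
    have hPF : P ⊓ RH 𝒜 F = ⊥ := ih fun i hi ↦ hF i (Finset.mem_insert_of_mem hi)
    have hker {m : R} (hm : m ∈ M) (hg : proj 𝒜 g m = 0) : m = 0 := by
      have hmF : m ∈ P ⊓ RH 𝒜 F := by
        refine ⟨hm.1, mem_RH_iff.mpr fun i hi ↦ ?_⟩
        by_cases hig : i = g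
        · rwa [hig]
        · exact mem_RH_iff.mp hm.2 i (by simp [hig, hi])
      simpa [hPF] using hmF
    have hinj : Set.InjOn (proj 𝒜 g) M := fun m hm m' hm' h ↦
      sub_eq_zero.mp (hker (sub_mem hm hm') (by rw [map_sub, h, sub_self]))
    refine eq_bot_iff.mpr fun m hm ↦ ?_
    have hmg : m ∈ P ⊓ 𝒜 g := by
      refine AddSubgroup.mem_inf.mpr ⟨hm.1, ?_⟩
      rw [← RH_singleton (𝒜 := 𝒜) g, mem_RH_iff]
      intro i hig
      rw [Set.mem_singleton_iff] at hig
      by_cases hi : i ∈ F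
      · exact proj_eq_zero_of_proj_injOn hstrong hcent (Ne.symm hig) (hsimp g) hM hinj hm
      · exact mem_RH_iff.mp hm.2 i (by simp [hi, hig])
    rwa [hF g (Finset.mem_insert_self g F)] at hmg

lemma RH_setOf_le_eq_self (hstrong : IsStronglyGraded 𝒜) (hcent : CentralizerEqCenter 𝒜)
    (hsimp : ∀ i, IsSimpleBimod 𝒜 (𝒜 i)) {P : AddSubgroup R} (hP : IsSubBimodule 𝒜 P) :
    RH 𝒜 {i | 𝒜 i ≤ P} = P := by
  classical
  refine le_antisymm (RH_le fun i hi ↦ hi) fun x hx ↦ ?_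
  set F := (decompose 𝒜 x).support
  set y := ∑ i ∈ F with 𝒜 i ≤ P, proj 𝒜 i x
  set z := ∑ i ∈ F with ¬𝒜 i ≤ P, proj 𝒜 i x
  have hxyz : y + z = x := by
    rw [Finset.sum_filter_add_sum_filter_not]
    exact sum_support_decompose 𝒜 x
  have hyP : y ∈ RH 𝒜 {i | 𝒜 i ≤ P} :=
    sum_mem fun i hi ↦ le_RH (Finset.mem_filter.mp hi).2 (proj_mem i x)
  have hz : z ∈ P ⊓ RH 𝒜 ↑(F.filter fun i ↦ ¬𝒜 i ≤ P) := by
    have hzxy : z = x - y := by rw [← hxyz, add_sub_cancel_left]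
    refine AddSubgroup.mem_inf.mpr ⟨hzxy ▸ sub_mem hx (RH_le (fun i hi ↦ hi) hyP), ?_⟩
    exact sum_mem fun i hi ↦ le_RH hi (proj_mem i x)
  rw [inf_RH_eq_bot hstrong hcent hsimp hP _
    fun i hi ↦ (hsimp i).inf_eq_bot hP (Finset.mem_filter.mp hi).2] at hz
  rwa [← hxyz, AddSubgroup.mem_bot.mp hz, add_zero]

lemma subset_of_bimodIso (hstrong : IsStronglyGraded 𝒜) (hcent : CentralizerEqCenter 𝒜)
    (hsimp : ∀ i, IsSimpleBimod 𝒜 (𝒜 i)) {S T : Set ι} (Φ : BimodIso 𝒜 (RH 𝒜 S) (RH 𝒜 T)) :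
    S ⊆ T := by
  classical
  intro g hg
  have hle : 𝒜 g ≤ RH 𝒜 S := le_RH hg
  obtain ⟨y, hy, hy0⟩ := (AddSubgroup.bot_or_exists_ne_zero (𝒜 g)).resolve_left (hsimp g).1
  have hΦy : (Φ.toEquiv ⟨y, hle hy⟩ : R) ≠ 0 := by simpa using hy0
  obtain ⟨t, ht⟩ := exists_proj_ne_zero (𝒜 := 𝒜) hΦy
  have htT : t ∈ T := by
    by_contra htT
    exact ht (mem_RH_iff.mp (Φ.toEquiv _).2 t htT)
  by_contra hgT
  set f : R → R := fun x ↦ if hx : x ∈ RH 𝒜 S then proj 𝒜 t (Φ.toEquiv ⟨x, hx⟩) else 0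
  have hf {x : R} (hx : x ∈ 𝒜 g) : f x = proj 𝒜 t (Φ.toEquiv ⟨x, hle hx⟩) := dif_pos (hle hx)
  refine ht ((hf hy).symm.trans ?_)
  refine bimoduleMap_eq_zero hstrong hcent (ne_of_mem_of_not_mem htT hgT).symm f
    (fun x hx ↦ hf hx ▸ proj_mem t _) (fun a ha x hx ↦ ?_) (fun a ha x hx ↦ ?_) hy
  · rw [hf (mul_mem_left_of_mem_zero ha hx), hf hx, Φ.map_left a x ha (hle hx),
      proj_mul_left_of_mem_zero ha]
  · rw [hf (mul_mem_right_of_mem_zero ha hx), hf hx, Φ.map_right a x ha (hle hx),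
      proj_mul_right_of_mem_zero ha]

lemma nonempty_bimodIso_RH_iff (hstrong : IsStronglyGraded 𝒜) (hcent : CentralizerEqCenter 𝒜)
    (hsimp : ∀ i, IsSimpleBimod 𝒜 (𝒜 i)) (S T : Set ι) :
    Nonempty (BimodIso 𝒜 (RH 𝒜 S) (RH 𝒜 T)) ↔ S = T := by
  refine ⟨fun ⟨Φ⟩ ↦ ?_, ?_⟩
  · exact (subset_of_bimodIso hstrong hcent hsimp Φ).antisymm
      (subset_of_bimodIso hstrong hcent hsimp (Φ.symm (isSubBimodule_RH S)))
  · rintro rfl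
    exact ⟨⟨AddEquiv.refl _, fun _ _ _ _ _ ↦ rfl, fun _ _ _ _ _ ↦ rfl⟩⟩

end StronglyGraded

end Controlled

/-- A strongly `G`-graded ring `R` is `G`-controlled iff every `R_g`
is a simple `R_e`-bimodule and `C_R(R_e) = Z(R_e)`. -/
theorem stmt15 (𝒜 : G → AddSubgroup R) [GradedRing 𝒜]
    (hstrong : Controlled.IsStronglyGraded 𝒜) :
    Controlled.IsControlled 𝒜 ↔
      ((∀ g : G, Controlled.IsSimpleBimod 𝒜 (𝒜 g)) ∧
        Controlled.CentralizerEqCenter 𝒜) := by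
  refine ⟨fun hc ↦ ⟨hc.isSimpleBimod, hc.centralizerEqCenter⟩, fun ⟨hsimp, hcent⟩ ↦ ?_⟩
  exact ⟨Controlled.isSubBimodule_RH, Controlled.RH_injective fun g ↦ (hsimp g).1,
    fun P hP ↦ ⟨_, Controlled.RH_setOf_le_eq_self hstrong hcent hsimp hP⟩,
    Controlled.nonempty_bimodIso_RH_iff hstrong hcent hsimp⟩
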